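/- Lemma 3.5 (degenerate descent lemma): For all x, y ∈ H, f(y) ≤ f(x) + ⟪∇f(x), y − x⟫ + (β/(2ν)) · ⟪Q(y − x), y − x⟫. (Since the range of ∇f is contained in the range of Q, the linear term ⟪∇f(x), y − x⟫ equals the paper's ⟪Q(y − x), Q†∇f(x)⟫.) -/

import Mathlib

/-!
Along the segment `x + t v`, `v = y - x`, the claim is the integrated form of the bound
`⟪∇f(x + t v) - ∇f(x), v⟫ ≤ (β / ν) t ‖v‖_Q²`. The increment `d = ∇f(x + t v) - ∇f(x)` lies in the
range of `Q`, so `d = Q p` with `p ⊥ ker Q`; Cauchy–Schwarz for the semi-inner product `⟪Q ·, ·⟫`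
and `ν ‖p‖ ≤ ‖Q p‖` give `ν ⟪d, v⟫² ≤ ‖d‖² ‖v‖_Q²`, while cocoercivity gives
`‖d‖² ≤ β t ⟪d, v⟫`. Dividing by `⟪d, v⟫` (when it is positive) yields the bound.
-/

open RealInnerProductSpace Set

section SeminormOfPositiveOperator

variable {H : Type*} [NormedAddCommGroup H] [InnerProductSpace ℝ H]

theorem inner_apply_sq_le_of_symm_of_nonneg {Q : H →L[ℝ] H}
    (hQsym : ∀ x y : H, ⟪Q x, y⟫ = ⟪x, Q y⟫) (hQpos : ∀ x : H, 0 ≤ ⟪Q x, x⟫) (u w : H) :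
    ⟪Q u, w⟫ ^ 2 ≤ ⟪Q u, u⟫ * ⟪Q w, w⟫ := by
  have hcs := LinearMap.BilinForm.apply_mul_apply_le_of_forall_zero_le
    ((innerₗ H).compl₁₂ (Q : H →ₗ[ℝ] H) LinearMap.id) hQpos u w
  simp only [LinearMap.compl₁₂_apply, innerₗ_apply_apply, ContinuousLinearMap.coe_coe,
    LinearMap.id_coe, id_eq] at hcs
  rwa [hQsym w u, real_inner_comm (Q u) w, ← sq] at hcs

theorem ContinuousLinearMap.exists_mem_orthogonal_ker_apply_eq [CompleteSpace H]
    {F : Type*} [NormedAddCommGroup F] [NormedSpace ℝ F] (T : H →L[ℝ] F) {d : F}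
    (hd : d ∈ range T) :
    ∃ p ∈ (LinearMap.ker (T : H →ₗ[ℝ] F))ᗮ, T p = d := by
  obtain ⟨p, rfl⟩ := hd
  have : CompleteSpace (LinearMap.ker (T : H →ₗ[ℝ] F)) := T.isClosed_ker.completeSpace_coe
  obtain ⟨p₀, hp₀, p₁, hp₁, rfl⟩ :=
    (LinearMap.ker (T : H →ₗ[ℝ] F)).exists_add_mem_mem_orthogonal p
  exact ⟨p₁, hp₁, by rw [map_add, show T p₀ = 0 from hp₀, zero_add]⟩

theorem mul_inner_apply_self_le_norm_sq {Q : H →L[ℝ] H} {ν : ℝ} (hν : 0 < ν)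
    (hνQ : ∀ w ∈ (LinearMap.ker (Q : H →ₗ[ℝ] H))ᗮ, ν * ‖w‖ ≤ ‖Q w‖)
    {p : H} (hp : p ∈ (LinearMap.ker (Q : H →ₗ[ℝ] H))ᗮ) :
    ν * ⟪Q p, p⟫ ≤ ‖Q p‖ ^ 2 :=
  calc ν * ⟪Q p, p⟫ ≤ ν * (‖Q p‖ * ‖p‖) := by gcongr; exact real_inner_le_norm _ _
    _ = ‖Q p‖ * (ν * ‖p‖) := by ring
    _ ≤ ‖Q p‖ * ‖Q p‖ := by gcongr; exact hνQ p hp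
    _ = ‖Q p‖ ^ 2 := (sq _).symm

theorem mul_inner_sq_le_of_mem_range [CompleteSpace H] {Q : H →L[ℝ] H}
    (hQsym : ∀ x y : H, ⟪Q x, y⟫ = ⟪x, Q y⟫) (hQpos : ∀ x : H, 0 ≤ ⟪Q x, x⟫)
    {ν : ℝ} (hν : 0 < ν) (hνQ : ∀ w ∈ (LinearMap.ker (Q : H →ₗ[ℝ] H))ᗮ, ν * ‖w‖ ≤ ‖Q w‖)
    {d : H} (hd : d ∈ range Q) (w : H) :
    ν * ⟪d, w⟫ ^ 2 ≤ ‖d‖ ^ 2 * ⟪Q w, w⟫ := by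
  obtain ⟨p, hp, rfl⟩ := Q.exists_mem_orthogonal_ker_apply_eq hd
  calc ν * ⟪Q p, w⟫ ^ 2 ≤ ν * (⟪Q p, p⟫ * ⟪Q w, w⟫) := by
        gcongr; exact inner_apply_sq_le_of_symm_of_nonneg hQsym hQpos p w
    _ = ν * ⟪Q p, p⟫ * ⟪Q w, w⟫ := by ring
    _ ≤ ‖Q p‖ ^ 2 * ⟪Q w, w⟫ := by
        gcongr
        · exact hQpos w
        · exact mul_inner_apply_self_le_norm_sq hν hνQ hp

theorem mul_inner_le_of_norm_sq_le_mul_inner [CompleteSpace H] {Q : H →L[ℝ] H}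
    (hQsym : ∀ x y : H, ⟪Q x, y⟫ = ⟪x, Q y⟫) (hQpos : ∀ x : H, 0 ≤ ⟪Q x, x⟫)
    {ν : ℝ} (hν : 0 < ν) (hνQ : ∀ w ∈ (LinearMap.ker (Q : H →ₗ[ℝ] H))ᗮ, ν * ‖w‖ ≤ ‖Q w‖)
    {d : H} (hd : d ∈ range Q) (v : H) {s : ℝ} (hs : 0 ≤ s) (hdv : ‖d‖ ^ 2 ≤ s * ⟪d, v⟫) :
    ν * ⟪d, v⟫ ≤ s * ⟪Q v, v⟫ := by
  have hrange := mul_inner_sq_le_of_mem_range hQsym hQpos hν hνQ hd v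
  have hc := hQpos v
  rcases le_or_gt ⟪d, v⟫ 0 with hneg | hpos
  · nlinarith
  · nlinarith [mul_le_mul_of_nonneg_right hdv hc]

end SeminormOfPositiveOperator

theorem le_add_deriv_add_of_deriv_sub_le {g g' : ℝ → ℝ} (hg : ∀ t, HasDerivAt g (g' t) t)
    {L : ℝ} (hL : ∀ t ∈ Ioo (0 : ℝ) 1, g' t - g' 0 ≤ L * t) :
    g 1 ≤ g 0 + g' 0 + L / 2 := by
  set φ : ℝ → ℝ := fun t => g t - t * g' 0 - L * t ^ 2 / 2
  have hφ : ∀ t, HasDerivAt φ (g' t - g' 0 - L * t) t := fun t => by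
    have := ((hg t).sub ((hasDerivAt_id' t).mul_const (g' 0))).sub
      (((hasDerivAt_pow 2 t).const_mul L).div_const 2)
    exact this.congr_deriv (by norm_num; ring)
  have hanti : AntitoneOn φ (Icc 0 1) := by
    refine antitoneOn_of_hasDerivWithinAt_nonpos (convex_Icc 0 1)
      (fun t _ => (hφ t).continuousAt.continuousWithinAt) (fun t _ => (hφ t).hasDerivWithinAt) ?_
    intro t ht
    rw [interior_Icc] at ht
    linarith [hL t ht]
  have := hanti (left_mem_Icc.mpr zero_le_one) (right_mem_Icc.mpr zero_le_one) zero_le_one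
  simp only [φ] at this
  linarith

theorem le_add_inner_add_of_inner_gradient_sub_le {H : Type*} [NormedAddCommGroup H]
    [InnerProductSpace ℝ H] [CompleteSpace H] {f : H → ℝ} {f' : H → H}
    (hf : ∀ x, HasGradientAt f (f' x) x) (x v : H) {L : ℝ}
    (hL : ∀ t ∈ Ioo (0 : ℝ) 1, ⟪f' (x + t • v) - f' x, v⟫ ≤ L * t) :
    f (x + v) ≤ f x + ⟪f' x, v⟫ + L / 2 := by
  have hg : ∀ t : ℝ, HasDerivAt (fun s => f (x + s • v)) ⟪f' (x + t • v), v⟫ t := fun t => by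
    have hline : HasDerivAt (fun s : ℝ => x + s • v) v t := by
      simpa using ((hasDerivAt_id t).smul_const v).const_add x
    simpa [Function.comp_def] using (hf (x + t • v)).hasFDerivAt.comp_hasDerivAt t hline
  have := le_add_deriv_add_of_deriv_sub_le hg (L := L) fun t ht => by
    simpa only [zero_smul, add_zero, inner_sub_left] using hL t ht
  simpa only [one_smul, zero_smul, add_zero] using this

/-- Lemma 3.5: degenerate descent lemma. -/
theorem stmt_14
    {H : Type*} [NormedAddCommGroup H] [InnerProductSpace ℝ H] [CompleteSpace H]
    (Q : H →L[ℝ] H)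
    (hQsym : ∀ x y : H, ⟪Q x, y⟫ = ⟪x, Q y⟫)
    (hQpos : ∀ x : H, 0 ≤ ⟪Q x, x⟫)
    (ν : ℝ) (hν : 0 < ν)
    (hνQ : ∀ w ∈ (LinearMap.ker (Q : H →ₗ[ℝ] H))ᗮ, ν * ‖w‖ ≤ ‖Q w‖)
    (β : ℝ) (hβ : 0 ≤ β)
    (f : H → ℝ) (f' : H → H)
    (hf : ∀ x : H, HasGradientAt f (f' x) x)
    (hranf' : Set.range f' ⊆ Set.range Q)
    (hcoco : ∀ x y : H, ‖f' x - f' y‖ ^ 2 ≤ β * ⟪f' x - f' y, x - y⟫) :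
    ∀ x y : H, f y ≤ f x + ⟪f' x, y - x⟫ + (β / (2 * ν)) * ⟪Q (y - x), y - x⟫ := by
  intro x y
  set v := y - x
  have hincr : ∀ t ∈ Ioo (0 : ℝ) 1,
      ⟪f' (x + t • v) - f' x, v⟫ ≤ β * ⟪Q v, v⟫ / ν * t := fun t ht => by
    have hd : f' (x + t • v) - f' x ∈ range Q := by
      obtain ⟨a, ha⟩ := hranf' (mem_range_self (x + t • v))
      obtain ⟨b, hb⟩ := hranf' (mem_range_self x)
      exact ⟨a - b, by rw [map_sub, ha, hb]⟩
    have hdv := hcoco (x + t • v) x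
    rw [add_sub_cancel_left, real_inner_smul_right, ← mul_assoc] at hdv
    have := mul_inner_le_of_norm_sq_le_mul_inner hQsym hQpos hν hνQ hd v
      (mul_nonneg hβ ht.1.le) hdv
    rw [div_mul_eq_mul_div, le_div_iff₀ hν]
    linarith
  have := le_add_inner_add_of_inner_gradient_sub_le hf x v hincr
  rw [add_sub_cancel] at this
  calc f y ≤ f x + ⟪f' x, v⟫ + β * ⟪Q v, v⟫ / ν / 2 := this
    _ = f x + ⟪f' x, v⟫ + β / (2 * ν) * ⟪Q v, v⟫ := by field_simp
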